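/- Let r > 0 and let Q be a probability measure on [0,1] with Q({0}) < 1. For v ∈ [0,1], set Λ0(v) := (1−v)² + r and Λ1(v) := (1+v)² + r. Then for every s ∈ (1/2, 1], ∫ C_s(Λ0(v), Λ1(v)) dQ(v) < ∫ C_{1/2}(Λ0(v), Λ1(v)) dQ(v). Consequently, any maximizer over s ∈ [0,1] of s ↦ ∫ C_s(Λ0(v), Λ1(v)) dQ(v) lies in (0, 1/2]. -/

import Mathlib

/-!
Write `l0 = eˣ`, `l1 = eʸ`, so that `C_s(l0, l1) = s eˣ + (1 - s) eʸ - e^(s x + (1 - s) y)`.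
Since the exponential lies strictly above its tangent lines, for `x < y` and `s > 1/2` this is
strictly below the tangent line of `s ↦ C_s` at `s = 1/2`, whose slope
`eˣ - eʸ + e^((x + y)/2) (y - x)` is `≤ 0` because `u ≤ sinh u` for `u ≥ 0`. Hence
`C_s < C_{1/2}` pointwise wherever `Λ0(v) < Λ1(v)`, i.e. for `v ∈ (0, 1]`, while at `v = 0` both
vanish; as `Q` charges `(0, 1]`, the strict inequality survives integration. Finally
`C_0 = C_1 = 0`, so a maximizer can be neither `0` nor larger than `1/2`.
-/

open MeasureTheory

/-- The Chernoff `s`-divergence between Poisson distributions with rates `l0` and `l1`. -/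
noncomputable def chernoffPoisson (s l0 l1 : ℝ) : ℝ :=
  s * l0 + (1 - s) * l1 - l0 ^ s * l1 ^ (1 - s)

open Real Set

lemma Real.exp_add_div_two_mul_sub_le_exp_sub_exp {x y : ℝ} (hxy : x ≤ y) :
    exp ((x + y) / 2) * (y - x) ≤ exp y - exp x := by
  have hsinh : (y - x) / 2 ≤ sinh ((y - x) / 2) := self_le_sinh_iff.2 (by linarith)
  have hdiff : exp y - exp x = exp ((x + y) / 2) * (2 * sinh ((y - x) / 2)) := by
    rw [sinh_eq, mul_div_cancel₀ _ two_ne_zero, mul_sub, ← exp_add, ← exp_add]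
    ring_nf
  rw [hdiff]
  gcongr
  linarith

lemma chernoffPoisson_zero (l0 l1 : ℝ) : chernoffPoisson 0 l0 l1 = 0 := by
  simp [chernoffPoisson]

lemma chernoffPoisson_one (l0 l1 : ℝ) : chernoffPoisson 1 l0 l1 = 0 := by
  simp [chernoffPoisson]

lemma chernoffPoisson_self (s : ℝ) {l : ℝ} (hl : 0 ≤ l) : chernoffPoisson s l l = 0 := by
  rw [chernoffPoisson, ← rpow_add' hl (by norm_num), add_sub_cancel, rpow_one]
  ring

lemma chernoffPoisson_exp (s x y : ℝ) :
    chernoffPoisson s (exp x) (exp y) =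
      s * exp x + (1 - s) * exp y - exp (x * s + y * (1 - s)) := by
  rw [chernoffPoisson, ← exp_mul, ← exp_mul, exp_add]

lemma chernoffPoisson_lt_chernoffPoisson_half {s l0 l1 : ℝ} (hs : 1 / 2 < s) (h0 : 0 < l0)
    (h01 : l0 < l1) : chernoffPoisson s l0 l1 < chernoffPoisson (1 / 2) l0 l1 := by
  obtain ⟨x, rfl⟩ : ∃ x, exp x = l0 := ⟨log l0, exp_log h0⟩
  obtain ⟨y, rfl⟩ : ∃ y, exp y = l1 := ⟨log l1, exp_log (h0.trans h01)⟩
  have hxy : x < y := exp_lt_exp.1 h01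
  have hd : (s - 1 / 2) * (x - y) ≠ 0 := mul_ne_zero (by linarith) (by linarith)
  have htangent : exp ((x + y) / 2) * ((s - 1 / 2) * (x - y) + 1) < exp (x * s + y * (1 - s)) :=
    calc _ < exp ((x + y) / 2) * exp ((s - 1 / 2) * (x - y)) := by
          gcongr; exact add_one_lt_exp hd
      _ = exp (x * s + y * (1 - s)) := by rw [← exp_add]; ring_nf
  have hslope : (s - 1 / 2) * (exp ((x + y) / 2) * (y - x)) ≤ (s - 1 / 2) * (exp y - exp x) :=
    mul_le_mul_of_nonneg_left (exp_add_div_two_mul_sub_le_exp_sub_exp hxy.le) (by linarith)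
  have hhalf : exp (x * (1 / 2) + y * (1 - 1 / 2)) = exp ((x + y) / 2) := by ring_nf
  rw [chernoffPoisson_exp, chernoffPoisson_exp, hhalf]
  linarith

lemma Continuous.chernoffPoisson {α : Type*} [TopologicalSpace α] (s : ℝ) {f g : α → ℝ}
    (hf : Continuous f) (hg : Continuous g) (hf0 : ∀ a, 0 < f a) (hg0 : ∀ a, 0 < g a) :
    Continuous fun a => chernoffPoisson s (f a) (g a) :=
  ((continuous_const.mul hf).add (continuous_const.mul hg)).sub
    ((hf.rpow_const fun a => .inl (hf0 a).ne').mul (hg.rpow_const fun a => .inl (hg0 a).ne'))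

lemma integral_lt_integral_of_ae_le_of_measure_setOf_lt_ne_zero {α : Type*} [MeasurableSpace α]
    {μ : Measure α} {f g : α → ℝ} (hf : Integrable f μ) (hg : Integrable g μ) (hle : f ≤ᵐ[μ] g)
    (hlt : μ {a | f a < g a} ≠ 0) : ∫ a, f a ∂μ < ∫ a, g a ∂μ := by
  rw [← sub_pos, ← integral_sub hg hf, integral_pos_iff_support_of_nonneg_ae
    (hle.mono fun a => sub_nonneg.2) (hg.sub hf)]
  exact pos_iff_ne_zero.2 (mt (measure_mono_null fun a ha => (sub_pos.2 ha).ne') hlt)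

noncomputable def bpskExponent (r : ℝ) (Q : Measure ℝ) (s : ℝ) : ℝ :=
  ∫ v, chernoffPoisson s ((1 - v) ^ 2 + r) ((1 + v) ^ 2 + r) ∂Q

lemma bpskExponent_zero (r : ℝ) (Q : Measure ℝ) : bpskExponent r Q 0 = 0 := by
  simp [bpskExponent, chernoffPoisson_zero]

lemma bpskExponent_one (r : ℝ) (Q : Measure ℝ) : bpskExponent r Q 1 = 0 := by
  simp [bpskExponent, chernoffPoisson_one]

lemma integrable_chernoffPoisson_bpsk (s : ℝ) {r : ℝ} (hr : 0 < r) {Q : Measure ℝ}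
    [IsFiniteMeasure Q] (hQsupp : Q (Icc (0 : ℝ) 1)ᶜ = 0) :
    Integrable (fun v => chernoffPoisson s ((1 - v) ^ 2 + r) ((1 + v) ^ 2 + r)) Q := by
  rw [← Measure.restrict_eq_self_of_ae_mem (ae_iff.2 hQsupp)]
  exact ((Continuous.chernoffPoisson s (by fun_prop) (by fun_prop) (fun v => by positivity)
    (fun v => by positivity)).continuousOn.integrableOn_compact isCompact_Icc)

lemma bpskExponent_lt_half {r : ℝ} (hr : 0 < r) {Q : Measure ℝ} [IsProbabilityMeasure Q]
    (hQsupp : Q (Icc (0 : ℝ) 1)ᶜ = 0) (hQ0 : Q {(0 : ℝ)} < 1) {s : ℝ} (hs : 1 / 2 < s) :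
    bpskExponent r Q s < bpskExponent r Q (1 / 2) := by
  have hlt : ∀ v, 0 < v →
      chernoffPoisson s ((1 - v) ^ 2 + r) ((1 + v) ^ 2 + r) <
        chernoffPoisson (1 / 2) ((1 - v) ^ 2 + r) ((1 + v) ^ 2 + r) := fun v hv =>
    chernoffPoisson_lt_chernoffPoisson_half hs (by positivity) (by nlinarith)
  refine integral_lt_integral_of_ae_le_of_measure_setOf_lt_ne_zero
    (integrable_chernoffPoisson_bpsk s hr hQsupp)
    (integrable_chernoffPoisson_bpsk _ hr hQsupp) ?_ ?_
  · filter_upwards [ae_iff.2 hQsupp] with v hv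
    rcases hv.1.eq_or_lt with rfl | hv0
    · rw [sub_zero, add_zero, chernoffPoisson_self _ (by positivity),
        chernoffPoisson_self _ (by positivity)]
    · exact (hlt v hv0).le
  · have hcompl : Q {(0 : ℝ)}ᶜ ≠ 0 := by
      rw [Ne, prob_compl_eq_zero_iff (measurableSet_singleton 0)]
      exact hQ0.ne
    refine fun h => hcompl (measure_mono_null (fun v hv => ?_) (measure_union_null h hQsupp))
    by_cases hv' : v ∈ Icc (0 : ℝ) 1
    · exact .inl (hlt v (lt_of_le_of_ne hv'.1 (Ne.symm hv)))
    · exact .inr hv'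

/-- For a dark-count rate `r > 0` and a probability measure `Q` on `[0,1]` that is not the
point mass at `0`, the expected BPSK Chernoff exponent at any `s ∈ (1/2,1]` is strictly
smaller than at `s = 1/2`; consequently any maximizer over `[0,1]` of
`s ↦ ∫ C_s((1-v)²+r,(1+v)²+r) dQ(v)` lies in `(0,1/2]`. -/
theorem maximizer_in_left_half (r : ℝ) (hr : 0 < r) (Q : Measure ℝ)
    [IsProbabilityMeasure Q] (hQsupp : Q (Set.Icc (0 : ℝ) 1)ᶜ = 0)
    (hQ0 : Q {(0 : ℝ)} < 1) :
    (∀ s ∈ Set.Ioc (1 / 2 : ℝ) 1,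
      (∫ v, chernoffPoisson s ((1 - v) ^ 2 + r) ((1 + v) ^ 2 + r) ∂Q) <
        ∫ v, chernoffPoisson (1 / 2) ((1 - v) ^ 2 + r) ((1 + v) ^ 2 + r) ∂Q) ∧
    ∀ sStar ∈ Set.Icc (0 : ℝ) 1,
      (∀ s ∈ Set.Icc (0 : ℝ) 1,
        (∫ v, chernoffPoisson s ((1 - v) ^ 2 + r) ((1 + v) ^ 2 + r) ∂Q) ≤
          ∫ v, chernoffPoisson sStar ((1 - v) ^ 2 + r) ((1 + v) ^ 2 + r) ∂Q) →
      sStar ∈ Set.Ioc (0 : ℝ) (1 / 2) := by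
  have hlt : ∀ s, 1 / 2 < s → bpskExponent r Q s < bpskExponent r Q (1 / 2) :=
    fun s hs => bpskExponent_lt_half hr hQsupp hQ0 hs
  refine ⟨fun s hs => hlt s hs.1, fun sStar hsStar hmax => ⟨?_, ?_⟩⟩
  · refine hsStar.1.lt_of_ne fun h => (hlt 1 one_half_lt_one).not_ge ?_
    calc bpskExponent r Q (1 / 2) ≤ bpskExponent r Q sStar := hmax (1 / 2) (by norm_num)
      _ = bpskExponent r Q 1 := by rw [← h, bpskExponent_zero, bpskExponent_one]
  · by_contra! h
    exact (hlt sStar h).not_ge (hmax (1 / 2) (by norm_num))
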